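/- arXiv:1402.3018 — 4 statements merged into one kernel-verified Lean document; each statement's English description precedes it below -/
import Mathlib

section
/- Let q be a prime power, n ≥ 1, and let Y be a subset of F_q^n. If 0 ≤ d < q, then C(d+n, n) · |cl_d(Y)| ≤ q^n · |Y|, where C(d+n, n) denotes the binomial coefficient. -/
open MvPolynomial

noncomputable section

/-- The affine Hilbert function of an ideal `I`: the dimension of
`A_{≤d} / I_{≤d}`. -/
def affineHF {k : Type*} [Field k] {n : ℕ} (I : Ideal (MvPolynomial (Fin n) k)) (d : ℕ) : ℕ :=
  Module.finrank k
    ((MvPolynomial.restrictTotalDegree (Fin n) k d) ⧸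
      (Submodule.comap (MvPolynomial.restrictTotalDegree (Fin n) k d).subtype
        (Submodule.restrictScalars k I)))

/-- The affine Hilbert function of a set `X ⊆ k^n`. -/
def HF {k : Type*} [Field k] {n : ℕ} (X : Set (Fin n → k)) (d : ℕ) : ℕ :=
  affineHF (MvPolynomial.vanishingIdeal k X) d

/-- The degree `d` closure of `Y ⊆ k^n`. -/
def clDeg {k : Type*} [Field k] {n : ℕ} (d : ℕ) (Y : Set (Fin n → k)) :
    Set (Fin n → k) :=
  {x | ∀ P : MvPolynomial (Fin n) k, P.totalDegree ≤ d →
    (∀ y ∈ Y, MvPolynomial.eval y P = 0) → MvPolynomial.eval x P = 0}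

/-- The ideal `I^m(X)` of polynomials vanishing to order at least `m`
at every point of `X`. -/
def orderIdeal {k : Type*} [Field k] {n : ℕ} (m : ℕ) (X : Set (Fin n → k)) :
    Ideal (MvPolynomial (Fin n) k) :=
  ⨅ x ∈ X, (MvPolynomial.vanishingIdeal k ({x} : Set (Fin n → k))) ^ m

/-- The Hilbert function with multiplicity `m` of a set `X ⊆ k^n`. -/
def HFm {k : Type*} [Field k] {n : ℕ} (m : ℕ) (X : Set (Fin n → k)) (d : ℕ) : ℕ :=
  affineHF (orderIdeal m X) d

/-- `cl_d^{ℓ,m}(Y)`: points where all degree-`≤ d` polynomials vanishing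
to order `m` on `Y` vanish to order `ℓ`. -/
def clDegMult {k : Type*} [Field k] {n : ℕ} (d l m : ℕ) (Y : Set (Fin n → k)) :
    Set (Fin n → k) :=
  {x | ∀ P : MvPolynomial (Fin n) k, P.totalDegree ≤ d → P ∈ orderIdeal m Y →
    P ∈ (MvPolynomial.vanishingIdeal k ({x} : Set (Fin n → k))) ^ l}

/-- An affine line in `k^n`. -/
def IsAffineLine {k : Type*} [Field k] {n : ℕ} (L : Set (Fin n → k)) : Prop :=
  ∃ a v : Fin n → k, v ≠ 0 ∧ L = {p | ∃ t : k, p = a + t • v}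

/-- A curve of degree at most `Λ` in `k^n`. -/
def IsCurveOfDegree {k : Type*} [Field k] {n : ℕ} (Λ : ℕ) (C : Set (Fin n → k)) : Prop :=
  ∃ f : Fin n → Polynomial k, (∀ i, (f i).natDegree ≤ Λ) ∧
    C = Set.range fun t : k => fun i => (f i).eval t


/-!
Let `HF X d` be the dimension of the space of functions on `X` given by polynomials of degree
at most `d`. Then `HF (cl_d Y) d = HF Y d ≤ |Y|`, so it suffices to show
`C(d + n, n) |X| ≤ q ^ n HF X d` for every `X`, by induction on `n`.

Slice `X ⊆ k^(n+1)` along the last coordinate. Restriction to the slice `X_c` at `x_n = c`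
maps the polynomial functions of degree `≤ d + 1` on `X` onto those on `X_c`, and its kernel
contains `(x_n - c) g`, extended by zero, for every polynomial function `g` of degree `≤ d` on
`X ∖ {x_n = c}`. Hence `HF (X_c) (d + 1) + HF (X ∖ {x_n = c}) d ≤ HF X (d + 1)`; iterating over distinct values
`t_0, …, t_d` gives `∑ HF (X_(t_j)) (d - j) ≤ HF X d`. Taking for `t_j` the `d + 1` largest
slices in decreasing order, Chebyshev's sum inequality with the decreasing weights
`C(d - j + n, n)`, whose sum is `C(d + n + 1, n + 1)`, combines the induction hypotheses on
the slices into the claim.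
-/

section LinearAlgebra

variable {K M N : Type*} [Field K] [AddCommGroup M] [Module K M] [AddCommGroup N] [Module K N]

theorem Submodule.finrank_map_add_finrank_le_of_le_ker {V W : Submodule K M}
    [FiniteDimensional K V] (f : M →ₗ[K] N) (hWV : W ≤ V) (hWf : W ≤ LinearMap.ker f) :
    Module.finrank K (V.map f) + Module.finrank K W ≤ Module.finrank K V := by
  have hW : Module.finrank K W ≤ Module.finrank K (LinearMap.ker (f.domRestrict V)) := by
    rw [LinearMap.ker_domRestrict, ← (Submodule.comapSubtypeEquivOfLe hWV).finrank_eq]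
    exact Submodule.finrank_mono (Submodule.comap_mono hWf)
  have := (f.domRestrict V).finrank_range_add_finrank_ker
  rw [LinearMap.range_domRestrict] at this
  omega

end LinearAlgebra

section PolyFunctions

variable {K : Type*} [Field K] {n : ℕ}

def evalOn (X : Set (Fin n → K)) : MvPolynomial (Fin n) K →ₗ[K] (X → K) :=
  LinearMap.pi fun x => (aeval (x : Fin n → K)).toLinearMap

@[simp]
theorem evalOn_apply (X : Set (Fin n → K)) (P : MvPolynomial (Fin n) K) (x : X) :
    evalOn X P x = eval (x : Fin n → K) P :=
  rfl

def polyFunctions (d : ℕ) (X : Set (Fin n → K)) : Submodule K (X → K) :=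
  (restrictTotalDegree (Fin n) K d).map (evalOn X)

theorem mem_polyFunctions {d : ℕ} {X : Set (Fin n → K)} {f : X → K} :
    f ∈ polyFunctions d X ↔
      ∃ P : MvPolynomial (Fin n) K, P.totalDegree ≤ d ∧ evalOn X P = f := by
  simp [polyFunctions, mem_restrictTotalDegree]

theorem HF_eq_finrank_polyFunctions (X : Set (Fin n → K)) (d : ℕ) :
    HF X d = Module.finrank K (polyFunctions d X) := by
  let f := evalOn X ∘ₗ (restrictTotalDegree (Fin n) K d).subtype
  have hker : LinearMap.ker f = Submodule.comap (restrictTotalDegree (Fin n) K d).subtype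
      ((vanishingIdeal K X).restrictScalars K) := by
    ext P
    simp [f, funext_iff]
  rw [HF, affineHF, ← hker, f.quotKerEquivRange.finrank_eq, LinearMap.range_comp,
    Submodule.range_subtype, polyFunctions]

theorem HF_clDeg (d : ℕ) (Y : Set (Fin n → K)) :
    HF (clDeg d Y) d = HF Y d := by
  have hsub : Y ⊆ clDeg d Y := fun y hy _ _ hP => hP y hy
  have : Submodule.comap (restrictTotalDegree (Fin n) K d).subtype
        ((vanishingIdeal K (clDeg d Y)).restrictScalars K) =
      Submodule.comap (restrictTotalDegree (Fin n) K d).subtype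
        ((vanishingIdeal K Y).restrictScalars K) := by
    ext ⟨P, hP⟩
    rw [mem_restrictTotalDegree] at hP
    simp only [Submodule.mem_comap, Submodule.subtype_apply, Submodule.restrictScalars_mem,
      mem_vanishingIdeal_iff]
    exact ⟨fun h y hy => h y (hsub hy), fun h x hx => hx P hP h⟩
  rw [HF, HF, affineHF, affineHF, this]

variable [Finite K]

theorem HF_le_ncard (X : Set (Fin n → K)) (d : ℕ) : HF X d ≤ X.ncard := by
  have := Fintype.ofFinite X
  rw [HF_eq_finrank_polyFunctions, ← Nat.card_coe_set_eq, Nat.card_eq_fintype_card,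
    ← Module.finrank_fintype_fun_eq_card K]
  exact Submodule.finrank_le _

theorem one_le_HF {X : Set (Fin n → K)} (hX : X.Nonempty) (d : ℕ) : 1 ≤ HF X d := by
  obtain ⟨x, hx⟩ := hX
  rw [HF_eq_finrank_polyFunctions, Nat.one_le_iff_ne_zero, Ne, Submodule.finrank_eq_zero,
    Submodule.eq_bot_iff]
  intro h
  have h1 := h (evalOn X 1) (mem_polyFunctions.2 ⟨1, by simp, rfl⟩)
  simpa using congrFun h1 ⟨x, hx⟩

end PolyFunctions

section Slices

variable {K : Type*} {n : ℕ}

def slice (X : Set (Fin (n + 1) → K)) (c : K) : Set (Fin n → K) :=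
  {x | Fin.snoc x c ∈ X}

def offHyperplane (X : Set (Fin (n + 1) → K)) (c : K) :
    Set (Fin (n + 1) → K) :=
  {x ∈ X | x (Fin.last n) ≠ c}

theorem slice_offHyperplane {X : Set (Fin (n + 1) → K)} {c c' : K}
    (h : c' ≠ c) : slice (offHyperplane X c) c' = slice X c' := by
  ext x
  simp [slice, offHyperplane, h]

variable [Field K]

def sliceRestrict (X : Set (Fin (n + 1) → K)) (c : K) : (X → K) →ₗ[K] (slice X c → K) :=
  LinearMap.funLeft K K fun x => ⟨Fin.snoc (x : Fin n → K) c, x.2⟩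

open Classical in
def extendMulLastSub (X : Set (Fin (n + 1) → K)) (c : K) :
    (offHyperplane X c → K) →ₗ[K] (X → K) where
  toFun g x := if h : (x : Fin (n + 1) → K) (Fin.last n) = c then 0
    else ((x : Fin (n + 1) → K) (Fin.last n) - c) * g ⟨x, x.2, h⟩
  map_add' g g' := by
    ext x
    split_ifs <;> simp [mul_add, *]
  map_smul' a g := by
    ext x
    split_ifs <;> simp [*, mul_left_comm]

theorem extendMulLastSub_injective (X : Set (Fin (n + 1) → K)) (c : K) :
    Function.Injective (extendMulLastSub X c) := by
  rw [← LinearMap.ker_eq_bot, LinearMap.ker_eq_bot']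
  intro g hg
  ext ⟨x, hxX, hx⟩
  have := congrFun hg ⟨x, hxX⟩
  simpa [extendMulLastSub, hx, sub_eq_zero] using this

theorem sliceRestrict_comp_extendMulLastSub (X : Set (Fin (n + 1) → K)) (c : K) :
    sliceRestrict X c ∘ₗ extendMulLastSub X c = 0 := by
  ext g x
  simp [sliceRestrict, extendMulLastSub, LinearMap.funLeft]

theorem polyFunctions_slice_le_map (d : ℕ) (X : Set (Fin (n + 1) → K)) (c : K) :
    polyFunctions d (slice X c) ≤ (polyFunctions d X).map (sliceRestrict X c) := by
  intro f hf
  obtain ⟨P, hP, rfl⟩ := mem_polyFunctions.1 hf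
  refine ⟨evalOn X (rename Fin.castSucc P), mem_polyFunctions.2 ⟨_, ?_, rfl⟩, ?_⟩
  · exact (totalDegree_rename_le _ _).trans hP
  · ext x
    simp [sliceRestrict, LinearMap.funLeft, eval_rename]

theorem map_polyFunctions_offHyperplane_le (d : ℕ) (X : Set (Fin (n + 1) → K)) (c : K) :
    (polyFunctions d (offHyperplane X c)).map (extendMulLastSub X c) ≤
      polyFunctions (d + 1) X := by
  rintro _ ⟨f, hf, rfl⟩
  obtain ⟨P, hP, rfl⟩ := mem_polyFunctions.1 hf
  refine mem_polyFunctions.2 ⟨(MvPolynomial.X (Fin.last n) - C c) * P, ?_, ?_⟩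
  · calc ((MvPolynomial.X (Fin.last n) - C c) * P).totalDegree
        ≤ (MvPolynomial.X (Fin.last n) - C c : MvPolynomial (Fin (n + 1)) K).totalDegree +
            P.totalDegree := totalDegree_mul _ _
      _ ≤ 1 + d := by
        gcongr
        exact (totalDegree_sub_C_le _ _).trans (totalDegree_X _).le
      _ = d + 1 := add_comm 1 d
  · ext x
    by_cases hx : (x : Fin (n + 1) → K) (Fin.last n) = c <;> simp [extendMulLastSub, hx]

end Slices

section SliceBounds

variable {K : Type*} [Field K] [Finite K] {n : ℕ}

theorem HF_slice_le (X : Set (Fin (n + 1) → K)) (c : K) (d : ℕ) :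
    HF (slice X c) d ≤ HF X d := by
  rw [HF_eq_finrank_polyFunctions, HF_eq_finrank_polyFunctions]
  exact (Submodule.finrank_mono (polyFunctions_slice_le_map d X c)).trans
    (Submodule.finrank_map_le _ _)

theorem HF_slice_add_HF_offHyperplane_le (X : Set (Fin (n + 1) → K)) (c : K) (d : ℕ) :
    HF (slice X c) (d + 1) + HF (offHyperplane X c) d ≤ HF X (d + 1) := by
  simp only [HF_eq_finrank_polyFunctions]
  have hker : (polyFunctions d (offHyperplane X c)).map (extendMulLastSub X c) ≤
      LinearMap.ker (sliceRestrict X c) := by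
    rintro _ ⟨g, -, rfl⟩
    rw [LinearMap.mem_ker, ← LinearMap.comp_apply, sliceRestrict_comp_extendMulLastSub,
      LinearMap.zero_apply]
  calc _ ≤ Module.finrank K ((polyFunctions (d + 1) X).map (sliceRestrict X c)) +
        Module.finrank K ((polyFunctions d (offHyperplane X c)).map (extendMulLastSub X c)) :=
        add_le_add (Submodule.finrank_mono (polyFunctions_slice_le_map _ X c))
          (Submodule.equivMapOfInjective _ (extendMulLastSub_injective X c) _).finrank_eq.le
    _ ≤ _ := Submodule.finrank_map_add_finrank_le_of_le_ker _
        (map_polyFunctions_offHyperplane_le d X c) hker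

theorem sum_HF_slice_le (X : Set (Fin (n + 1) → K)) (d : ℕ) {t : Fin (d + 1) → K}
    (ht : Function.Injective t) : ∑ j, HF (slice X (t j)) (d - j) ≤ HF X d := by
  induction d generalizing X with
  | zero => simpa using HF_slice_le X (t 0) 0
  | succ d ih =>
    have hrest : ∑ j : Fin (d + 1), HF (slice X (t j.succ)) (d - j) ≤
        HF (offHyperplane X (t 0)) d := by
      calc _ = ∑ j : Fin (d + 1), HF (slice (offHyperplane X (t 0)) (t j.succ)) (d - j) := by
            simp only [slice_offHyperplane (ht.ne (Fin.succ_ne_zero _))]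
        _ ≤ _ := ih _ (ht.comp (Fin.succ_injective _))
    rw [Fin.sum_univ_succ]
    simpa using (add_le_add_right hrest _).trans (HF_slice_add_HF_offHyperplane_le X (t 0) d)

end SliceBounds

theorem sum_ncard_slice {K : Type*} [Fintype K] {n : ℕ} (X : Set (Fin (n + 1) → K)) :
    ∑ c, (slice X c).ncard = X.ncard := by
  classical
  have hfiber : ∀ c, (slice X c).ncard = {x ∈ X | x (Fin.last n) = c}.ncard := by
    intro c
    have hinj : Function.Injective fun x : Fin n → K => (Fin.snoc x c : Fin (n + 1) → K) :=
      fun x y h => (Fin.snoc_injective2 h).1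
    rw [← Set.ncard_image_of_injective _ hinj]
    congr 1
    ext x
    constructor
    · rintro ⟨x', hx', rfl⟩
      exact ⟨hx', Fin.snoc_last _ _⟩
    · rintro ⟨hx, rfl⟩
      exact ⟨Fin.init x, by simpa [slice] using hx, Fin.snoc_init_self x⟩
  simp only [hfiber, Set.ncard_eq_toFinset_card']
  rw [Finset.card_eq_sum_card_fiberwise (f := fun x => x (Fin.last n)) (t := Finset.univ)
    (fun _ _ => Finset.mem_univ _)]
  congr! 2 with c
  ext x
  simp

theorem exists_equiv_fin_antitone {ι α : Type*} [Fintype ι] [LinearOrder α] (a : ι → α)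
    {N : ℕ} (hN : Fintype.card ι = N) : ∃ σ : Fin N ≃ ι, Antitone (a ∘ σ) := by
  let e : Fin N ≃ ι := (Fintype.equivFinOfCardEq hN).symm
  exact ⟨Fin.revPerm.trans ((Tuple.sort (a ∘ e)).trans e),
    fun i j hij => Tuple.monotone_sort (a ∘ e) (Fin.rev_le_rev.mpr hij)⟩

theorem Antitone.fin_append_zero {m r : ℕ} {w : Fin m → ℕ} (hw : Antitone w) :
    Antitone (Fin.append w (0 : Fin r → ℕ)) := by
  intro i j hij
  induction i using Fin.addCases with
  | left i =>
    induction j using Fin.addCases with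
    | left j => simpa using hw (Fin.le_def.2 (Fin.le_def.1 hij))
    | right j => simp
  | right i =>
    induction j using Fin.addCases with
    | left j =>
      exact absurd (Fin.le_def.1 hij) (by simp only [Fin.val_natAdd, Fin.val_castAdd]; omega)
    | right j => simp

theorem exists_injective_sum_mul_sum_le {ι : Type*} [Fintype ι] (a : ι → ℕ) {m r : ℕ}
    (hcard : Fintype.card ι = m + r) {w : Fin m → ℕ} (hw : Antitone w) :
    ∃ t : Fin m → ι, Function.Injective t ∧
      (∑ j, w j) * ∑ i, a i ≤ Fintype.card ι * ∑ j, w j * a (t j) := by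
  obtain ⟨σ, hσ⟩ := exists_equiv_fin_antitone a hcard
  refine ⟨σ ∘ Fin.castAdd r, σ.injective.comp (Fin.castAdd_injective m r), ?_⟩
  have := (hw.fin_append_zero (r := r)).monovary hσ |>.sum_mul_sum_le_card_mul_sum
  simpa [Fin.sum_univ_add, ← σ.sum_comp a, hcard] using this

theorem sum_choose_sub_add (d n : ℕ) :
    ∑ j : Fin (d + 1), (d - j + n).choose n = (d + n + 1).choose (n + 1) := by
  rw [Fin.sum_univ_eq_sum_range (fun j => (d - j + n).choose n), ← Nat.sum_range_add_choose,
    ← Finset.sum_range_reflect]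
  refine Finset.sum_congr rfl fun j hj => ?_
  rw [Finset.mem_range] at hj
  congr 2
  omega

theorem choose_mul_ncard_le_pow_mul_HF {K : Type*} [Field K] [Fintype K] {n d : ℕ}
    (hd : d < Fintype.card K) (X : Set (Fin n → K)) :
    (d + n).choose n * X.ncard ≤ Fintype.card K ^ n * HF X d := by
  induction n generalizing d with
  | zero =>
    rcases X.eq_empty_or_nonempty with rfl | hX
    · simp
    · have hX1 : X.ncard ≤ 1 := Set.ncard_le_one_of_subsingleton X
      simpa using hX1.trans (one_le_HF hX d)
  | succ n ih =>
    set q := Fintype.card K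
    obtain ⟨r, hr⟩ := Nat.exists_eq_add_of_le (Nat.succ_le_of_lt hd)
    have hw : Antitone fun j : Fin (d + 1) => (d - j + n).choose n :=
      fun i j hij => Nat.choose_le_choose n (by have := Fin.le_def.1 hij; omega)
    obtain ⟨t, ht, hcheb⟩ := exists_injective_sum_mul_sum_le (fun c => (slice X c).ncard) hr hw
    rw [sum_choose_sub_add, sum_ncard_slice] at hcheb
    calc (d + (n + 1)).choose (n + 1) * X.ncard
        = (d + n + 1).choose (n + 1) * X.ncard := by rw [add_assoc]
      _ ≤ q * ∑ j : Fin (d + 1), (d - j + n).choose n * (slice X (t j)).ncard := hcheb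
      _ ≤ q * ∑ j : Fin (d + 1), q ^ n * HF (slice X (t j)) (d - j) := by
        gcongr q * ∑ j, ?_ with j
        exact ih (by omega) _
      _ = q ^ (n + 1) * ∑ j : Fin (d + 1), HF (slice X (t j)) (d - j) := by
        rw [← Finset.mul_sum, pow_succ]; ring
      _ ≤ q ^ (n + 1) * HF X d := by
        gcongr
        exact sum_HF_slice_le X d ht

theorem statement2_general (K : Type*) [Field K] [Fintype K] (q n : ℕ) (hq : Fintype.card K = q)
    (Y : Set (Fin n → K)) (d : ℕ) (hd : d < q) :
    (d + n).choose n * (clDeg d Y).ncard ≤ q ^ n * Y.ncard := by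
  subst hq
  calc (d + n).choose n * (clDeg d Y).ncard
      ≤ Fintype.card K ^ n * HF (clDeg d Y) d := choose_mul_ncard_le_pow_mul_HF hd _
    _ = Fintype.card K ^ n * HF Y d := by rw [HF_clDeg]
    _ ≤ Fintype.card K ^ n * Y.ncard := by gcongr; exact HF_le_ncard Y d

/-- for `d < q`, `C(d+n, n) · |cl_d(Y)| ≤ q^n · |Y|`. -/
theorem statement2 (K : Type*) [Field K] [Fintype K] (q n : ℕ) (hq : Fintype.card K = q)
    (hn : 1 ≤ n) (Y : Set (Fin n → K)) (d : ℕ) (hd : d < q) :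
    (d + n).choose n * (clDeg d Y).ncard ≤ q ^ n * Y.ncard :=
  statement2_general K q n hq Y d hd

end
end

section
/- Let 0 < α < 1 be a real number, let L_1, …, L_c be (affine) lines in F_q^n with X = ⋃_i L_i, and for each i pick a subset γ_i ⊆ L_i with |γ_i| > q^α; let Y = ⋃_i γ_i. Then |X| ≤ n! · q^{n(1−α)} · |Y|. -/
open MvPolynomial

noncomputable section

/-!
Let `d = ⌊q ^ α⌋ < q`. A polynomial of degree at most `d` that vanishes on the more than `d` points
of `γ i` vanishes on the line `L i`, so `X` lies in the degree-`d` closure of `Y`, and restriction to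
`Y` is injective on polynomial functions of degree at most `d` on `X`.

The exponents of the standard monomials of `X` (for the lexicographic order) form a down-set
`S ⊆ [0, q)ⁿ` with `|S| = |X|`, and the monomials of `S` of degree at most `d` are linearly
independent on `X`, so there are at most `|Y|` of them. Daykin's inequality for the down-sets `S`
and `T = {μ | ∑ μ ≤ d}` of the lattice `ℕⁿ` gives `|S| |T| ≤ qⁿ |S ∩ T| ≤ qⁿ |Y|`, and stars and bars
give `n! |T| ≥ (d + 1)ⁿ ≥ q ^ (α n)`.
-/

open Finset
open scoped FinsetFamily Nat

theorem IsLowerSet.card_mul_card_le_card_inter_mul {α : Type*} [DistribLattice α] [DecidableEq α]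
    {s t u : Finset α} (hs : IsLowerSet (s : Set α)) (ht : IsLowerSet (t : Set α))
    (hu : s ⊻ t ⊆ u) : #s * #t ≤ #(s ∩ t) * #u := by
  refine (le_card_infs_mul_card_sups s t).trans (Nat.mul_le_mul (card_le_card ?_) (card_le_card hu))
  simp only [subset_iff, mem_infs, mem_inter]
  rintro _ ⟨a, ha, b, hb, rfl⟩
  exact ⟨hs inf_le_left ha, ht inf_le_right hb⟩

def expCube (n q : ℕ) : Finset (Fin n → ℕ) := Fintype.piFinset fun _ => range q

lemma mem_expCube {n q : ℕ} {μ : Fin n → ℕ} : μ ∈ expCube n q ↔ ∀ i, μ i < q := by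
  simp [expCube]

lemma card_expCube (n q : ℕ) : #(expCube n q) = q ^ n := by
  simp [expCube]

lemma sups_subset_expCube {n q : ℕ} {s t : Finset (Fin n → ℕ)} (hs : s ⊆ expCube n q)
    (ht : t ⊆ expCube n q) : s ⊻ t ⊆ expCube n q := by
  simp only [subset_iff, mem_sups, mem_expCube] at *
  rintro _ ⟨a, ha, b, hb, rfl⟩ i
  exact max_lt (hs ha i) (ht hb i)

def expDegLE (n d : ℕ) : Finset (Fin n → ℕ) :=
  (expCube n (d + 1)).filter fun μ => ∑ i, μ i ≤ d

lemma mem_expDegLE {n d : ℕ} {μ : Fin n → ℕ} : μ ∈ expDegLE n d ↔ ∑ i, μ i ≤ d := by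
  refine mem_filter.trans ⟨And.right, fun h => ⟨mem_expCube.2 fun i => ?_, h⟩⟩
  exact Nat.lt_succ_of_le ((single_le_sum (fun j _ => Nat.zero_le (μ j)) (mem_univ i)).trans h)

lemma isLowerSet_expDegLE (n d : ℕ) : IsLowerSet (expDegLE n d : Set (Fin n → ℕ)) :=
  fun _ _ hνμ hμ => mem_expDegLE.2 ((sum_le_sum fun i _ => hνμ i).trans (mem_expDegLE.1 hμ))

def expDegLEEquiv (n d : ℕ) : expDegLE n d ≃ {P : Fin (n + 1) → ℕ // ∑ i, P i = d} where
  toFun μ := ⟨Fin.cons (d - ∑ i, μ.1 i) μ.1, by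
    have := mem_expDegLE.1 μ.2
    rw [Fin.sum_cons]; omega⟩
  invFun P := ⟨Fin.tail P.1, mem_expDegLE.2 (by
    have := P.2
    rw [Fin.sum_univ_succ] at this
    simp only [Fin.tail]; omega)⟩
  left_inv μ := by simp
  right_inv P := by
    have := P.2
    rw [Fin.sum_univ_succ] at this
    ext i
    refine Fin.cases ?_ (fun j => rfl) i
    simp only [Fin.cons_zero, Fin.tail]
    omega

lemma card_expDegLE (n d : ℕ) : #(expDegLE n d) = (n + d).choose d := by
  rw [card_eq_of_equiv_fintype ((expDegLEEquiv n d).trans (Sym.equivNatSumOfFintype _ d).symm),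
    Sym.card_sym_eq_choose, Fintype.card_fin, Nat.add_right_comm, Nat.add_sub_cancel]

lemma pow_le_factorial_mul_card_expDegLE (n d : ℕ) : (d + 1) ^ n ≤ n ! * #(expDegLE n d) := by
  rw [card_expDegLE, add_comm n d, Nat.choose_symm_add, ← Nat.ascFactorial_eq_factorial_mul_choose]
  exact Nat.pow_succ_le_ascFactorial _ _

section StandardExponents

open Submodule

variable {K : Type*} [Field K] {n : ℕ}

def monomialOn (X : Set (Fin n → K)) (μ : Fin n → ℕ) : X → K := fun x => ∏ i, x.1 i ^ μ i

lemma monomialOn_add (X : Set (Fin n → K)) (μ ν : Fin n → ℕ) :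
    monomialOn X (μ + ν) = monomialOn X μ * monomialOn X ν := by
  ext x
  simp [monomialOn, pow_add, prod_mul_distrib]

def standardExponents (X : Set (Fin n → K)) : Set (Fin n → ℕ) :=
  {μ | monomialOn X μ ∉ span K (monomialOn X '' {ν | toLex ν < toLex μ})}

theorem isLowerSet_standardExponents (X : Set (Fin n → K)) :
    IsLowerSet (standardExponents X) := by
  intro μ ν hνμ hμ hν
  obtain ⟨u, rfl⟩ : ∃ u, μ = ν + u := ⟨μ - ν, (add_tsub_cancel_of_le hνμ).symm⟩
  apply hμ
  rw [monomialOn_add]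
  refine span_induction (p := fun f _ => f * monomialOn X u ∈
    span K (monomialOn X '' {ρ | toLex ρ < toLex (ν + u)})) ?_ ?_ ?_ ?_ hν
  · rintro _ ⟨ρ, hρ, rfl⟩
    exact subset_span ⟨ρ + u, add_lt_add_left hρ (toLex u), monomialOn_add ..⟩
  · simp
  · intro f g _ _ hf hg
    simpa [add_mul] using add_mem hf hg
  · intro c f _ hf
    simpa [smul_mul_assoc] using smul_mem _ c hf

theorem linearIndepOn_standardExponents (X : Set (Fin n → K)) :
    LinearIndepOn K (monomialOn X) (standardExponents X) := by
  classical
  refine linearIndepOn_of_finite _ fun t ht htfin => ?_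
  lift t to Finset (Fin n → ℕ) using htfin
  induction t using Finset.induction_on_max_value (toLex : (Fin n → ℕ) → Lex (Fin n → ℕ)) with
  | empty => simp
  | insert a s has hmax ih =>
    rw [coe_insert] at ht ⊢
    rw [linearIndepOn_insert (by simpa using has)]
    refine ⟨ih ((Set.subset_insert _ _).trans ht),
      fun hmem => ht (Set.mem_insert _ _) (span_mono ?_ hmem)⟩
    rintro _ ⟨ν, hν, rfl⟩
    exact ⟨ν, (hmax ν hν).lt_of_ne fun h => has (toLex.injective h ▸ hν), rfl⟩

theorem monomialOn_mem_span_standardExponents (X : Set (Fin n → K)) (μ : Fin n → ℕ) :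
    monomialOn X μ ∈ span K (monomialOn X '' standardExponents X) := by
  suffices ∀ m : Lex (Fin n → ℕ),
      monomialOn X (ofLex m) ∈ span K (monomialOn X '' standardExponents X) from this (toLex μ)
  intro m
  induction m using WellFoundedLT.induction with | _ m ih
  by_cases hm : ofLex m ∈ standardExponents X
  · exact subset_span ⟨_, hm, rfl⟩
  · refine span_le.2 ?_ (not_not.1 hm)
    rintro _ ⟨ν, hν, rfl⟩
    exact ih (toLex ν) hν

variable [Fintype K]

lemma pow_sub_card_add_one (x : K) {m : ℕ} (hm : Fintype.card K ≤ m) :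
    x ^ (m - Fintype.card K + 1) = x ^ m := by
  conv_rhs => rw [← Nat.sub_add_cancel hm, pow_add, FiniteField.pow_card, ← pow_succ]

theorem standardExponents_subset_expCube (X : Set (Fin n → K)) :
    standardExponents X ⊆ expCube n (Fintype.card K) := by
  intro μ hμ
  rw [mem_coe, mem_expCube]
  by_contra! ⟨i, hi⟩
  have hred : monomialOn X (Function.update μ i (μ i - Fintype.card K + 1)) = monomialOn X μ := by
    ext x
    refine prod_congr rfl fun j _ => ?_
    rcases eq_or_ne j i with rfl | hj
    · rw [Function.update_self, pow_sub_card_add_one _ hi]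
    · rw [Function.update_of_ne hj]
  refine hμ (subset_span ⟨_, ?_, hred⟩)
  have := Fintype.one_lt_card (α := K)
  simp only [Set.mem_ofPred_eq, Pi.toLex_update_lt_self_iff]
  omega

theorem span_range_monomialOn (X : Set (Fin n → K)) : span K (Set.range (monomialOn X)) = ⊤ := by
  refine eq_top_iff'.2 fun g => ?_
  obtain ⟨P, -, hP⟩ := mem_map.1 ((map_restrict_dom_evalₗ K (Fin n)).ge
    (mem_top : Function.extend Subtype.val g 0 ∈ ⊤))
  have hg : g = ∑ s ∈ P.support, P.coeff s • monomialOn X s := by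
    ext x
    rw [← Subtype.val_injective.extend_apply g 0 x, ← hP, evalₗ_apply, eval_eq']
    simp [monomialOn]
  rw [hg]
  exact sum_mem fun s _ => smul_mem _ _ (subset_span ⟨_, rfl⟩)

theorem span_standardExponents (X : Set (Fin n → K)) :
    span K (monomialOn X '' standardExponents X) = ⊤ := by
  rw [eq_top_iff, ← span_range_monomialOn X, span_le]
  rintro _ ⟨μ, rfl⟩
  exact monomialOn_mem_span_standardExponents X μ

theorem ncard_standardExponents (X : Set (Fin n → K)) :
    (standardExponents X).ncard = X.ncard := by
  have := Fintype.ofFinite X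
  let b := Module.Basis.mk (linearIndepOn_standardExponents X)
    (by rw [← Set.image_eq_range, span_standardExponents X])
  rw [← Nat.card_coe_set_eq, ← Module.finrank_eq_nat_card_basis b,
    Module.finrank_fintype_fun_eq_card, ← Nat.card_eq_fintype_card, Nat.card_coe_set_eq]

end StandardExponents

section Closure

open Submodule

variable {K : Type*} [Field K] {n : ℕ}

lemma clDeg_mono {d : ℕ} {Y Y' : Set (Fin n → K)} (h : Y ⊆ Y') : clDeg d Y ⊆ clDeg d Y' :=
  fun _ hx P hP hPY => hx P hP fun y hy => hPY y (h hy)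

lemma exists_totalDegree_le_of_mem_span_monomialOn {X : Set (Fin n → K)} {d : ℕ} {f : X → K}
    (hf : f ∈ span K (monomialOn X '' {μ | ∑ i, μ i ≤ d})) :
    ∃ P : MvPolynomial (Fin n) K, P.totalDegree ≤ d ∧ ∀ x, f x = eval x.1 P := by
  induction hf using span_induction with
  | mem f hf =>
    obtain ⟨μ, hμ, rfl⟩ := hf
    refine ⟨monomial (Finsupp.equivFunOnFinite.symm μ) 1, ?_, fun x => ?_⟩
    · refine (totalDegree_monomial_le _ _).trans ?_
      simpa [Finsupp.sum_fintype] using hμ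
    · simp [monomialOn, eval_monomial, Finsupp.prod_fintype]
  | zero => exact ⟨0, by simp, by simp⟩
  | add f g _ _ hf hg =>
    obtain ⟨P, hPd, hP⟩ := hf
    obtain ⟨Q, hQd, hQ⟩ := hg
    exact ⟨P + Q, (totalDegree_add P Q).trans (max_le hPd hQd), by simp [hP, hQ]⟩
  | smul c f _ hf =>
    obtain ⟨P, hPd, hP⟩ := hf
    exact ⟨c • P, (totalDegree_smul_le c P).trans hPd, by simp [hP]⟩

theorem card_le_ncard_of_subset_clDeg {X Y : Set (Fin n → K)} {d : ℕ} (hY : Y.Finite)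
    (hYX : Y ⊆ X) (hX : X ⊆ clDeg d Y) {s : Finset (Fin n → ℕ)}
    (hs : LinearIndepOn K (monomialOn X) ↑s) (hsd : ∀ μ ∈ s, ∑ i, μ i ≤ d) :
    #s ≤ Y.ncard := by
  have := hY.fintype
  let restrict : (X → K) →ₗ[K] (Y → K) := LinearMap.funLeft K K (Set.inclusion hYX)
  have hker : Disjoint (span K (Set.range fun μ : s => monomialOn X μ)) (LinearMap.ker restrict) := by
    refine disjoint_def.2 fun f hf hfY => ?_
    obtain ⟨P, hPd, hP⟩ := exists_totalDegree_le_of_mem_span_monomialOn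
      (span_mono (by rintro _ ⟨μ, rfl⟩; exact ⟨μ, hsd μ μ.2, rfl⟩) hf)
    ext x
    refine (hP x).trans (hX x.2 P hPd fun y hy => ?_)
    rw [← hP ⟨y, hYX hy⟩]
    exact congrFun hfY ⟨y, hy⟩
  calc #s = Fintype.card (s : Set (Fin n → ℕ)) := by simp
    _ ≤ Module.finrank K (Y → K) := (hs.map hker).fintype_card_le_finrank
    _ = Y.ncard := by
      rw [Module.finrank_fintype_fun_eq_card, ← Nat.card_eq_fintype_card, Nat.card_coe_set_eq]

theorem ncard_mul_pow_le_of_subset_clDeg [Fintype K] {X Y : Set (Fin n → K)} {d : ℕ}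
    (hd : d < Fintype.card K) (hYX : Y ⊆ X) (hX : X ⊆ clDeg d Y) :
    X.ncard * (d + 1) ^ n ≤ n ! * Fintype.card K ^ n * Y.ncard := by
  classical
  set q := Fintype.card K
  have hSfin : (standardExponents X).Finite :=
    (expCube n q).finite_toSet.subset (standardExponents_subset_expCube X)
  set S := hSfin.toFinset
  set T := expDegLE n d
  have hScube : S ⊆ expCube n q := by
    simpa [S, ← coe_subset] using standardExponents_subset_expCube X
  have hTcube : T ⊆ expCube n q := fun μ hμ => mem_expCube.2 fun i =>
    (mem_expCube.1 (mem_filter.1 hμ).1 i).trans_le hd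
  have hST : #S * #T ≤ #(S ∩ T) * q ^ n := by
    simpa [card_expCube] using IsLowerSet.card_mul_card_le_card_inter_mul
      (by simpa [S] using isLowerSet_standardExponents X) (isLowerSet_expDegLE n d)
      (sups_subset_expCube hScube hTcube)
  have hSTY : #(S ∩ T) ≤ Y.ncard :=
    card_le_ncard_of_subset_clDeg (Set.toFinite Y) hYX hX
      ((linearIndepOn_standardExponents X).mono (by simp [S]))
      fun μ hμ => mem_expDegLE.1 (mem_inter.1 hμ).2
  have hSX : #S = X.ncard := by
    rw [← ncard_standardExponents X, Set.ncard_eq_toFinset_card _ hSfin]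
  calc X.ncard * (d + 1) ^ n ≤ #S * (n ! * #T) := by
        rw [hSX]; exact Nat.mul_le_mul_left _ (pow_le_factorial_mul_card_expDegLE n d)
    _ = n ! * (#S * #T) := by ring
    _ ≤ n ! * (Y.ncard * q ^ n) :=
        Nat.mul_le_mul_left _ (hST.trans (Nat.mul_le_mul_right _ hSTY))
    _ = n ! * q ^ n * Y.ncard := by ring

end Closure

section Lines

lemma natDegree_aeval_le_totalDegree {σ R : Type*} [CommRing R] {g : σ → Polynomial R}
    (hg : ∀ i, (g i).natDegree ≤ 1) (P : MvPolynomial σ R) :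
    (aeval g P).natDegree ≤ P.totalDegree := by
  conv_lhs => rw [P.as_sum, map_sum]
  refine Polynomial.natDegree_sum_le_of_forall_le _ _ fun s hs => ?_
  rw [aeval_monomial, ← Polynomial.C_eq_algebraMap]
  refine (Polynomial.natDegree_C_mul_le _ _).trans ((Polynomial.natDegree_prod_le _ _).trans ?_)
  refine (sum_le_sum fun i _ => Polynomial.natDegree_pow_le_of_le _ (hg i)).trans ?_
  simpa [Finsupp.sum] using le_totalDegree hs

variable {K : Type*} [Field K] {n : ℕ}

theorem IsAffineLine.subset_clDeg {L γ : Set (Fin n → K)} (hL : IsAffineLine L) (hγL : γ ⊆ L)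
    {d : ℕ} (hd : d < γ.ncard) : L ⊆ clDeg d γ := by
  obtain ⟨a, v, -, rfl⟩ := hL
  have := (Set.finite_of_ncard_pos (hd.trans_le' (Nat.zero_le _))).fintype
  rintro _ ⟨t, rfl⟩ P hPd hPγ
  let Q : Polynomial K := aeval (fun i => Polynomial.C (v i) * Polynomial.X + Polynomial.C (a i)) P
  have hQ : ∀ s, Q.eval s = eval (a + s • v) P := fun s => by
    rw [← Polynomial.coe_aeval_eq_eval, ← AlgHom.comp_apply, comp_aeval, aeval_eq_eval]
    congr 2
    funext i
    simp only [Polynomial.coe_aeval_eq_eval, Polynomial.eval_add, Polynomial.eval_mul,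
      Polynomial.eval_C, Polynomial.eval_X, Pi.add_apply, Pi.smul_apply, smul_eq_mul]
    ring
  choose param hparam using hγL
  have hinj : Function.Injective fun y : γ => param y.2 := fun y z h =>
    Subtype.ext ((hparam y.2).trans ((congrArg (fun s => a + s • v) h).trans (hparam z.2).symm))
  have hQ0 : Q = 0 := by
    refine Polynomial.eq_zero_of_natDegree_lt_card_of_eval_eq_zero Q hinj (fun y => ?_) ?_
    · rw [hQ, ← hparam y.2]
      exact hPγ y.1 y.2
    · calc Q.natDegree ≤ P.totalDegree := natDegree_aeval_le_totalDegree
            (fun i => Polynomial.natDegree_linear_le) P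
        _ < Fintype.card γ := by rw [← Nat.card_eq_fintype_card, Nat.card_coe_set_eq]; omega
  rw [← hQ, hQ0, Polynomial.eval_zero]

end Lines

theorem statement4_general (K : Type*) [Field K] [Fintype K] (q n c : ℕ) (hq : Fintype.card K = q)
    (α : ℝ) (hα1 : α < 1)
    (L γ : Fin c → Set (Fin n → K))
    (hL : ∀ i, IsAffineLine (L i)) (hγL : ∀ i, γ i ⊆ L i)
    (hsize : ∀ i, (q : ℝ) ^ α < ((γ i).ncard : ℝ)) :
    (((⋃ i, L i).ncard : ℝ)) ≤
      (Nat.factorial n : ℝ) * (q : ℝ) ^ ((n : ℝ) * (1 - α)) * ((⋃ i, γ i).ncard : ℝ) := by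
  have hq1 : (1 : ℝ) < q := by exact_mod_cast hq ▸ Fintype.one_lt_card
  have hqα : 0 < (q : ℝ) ^ α := Real.rpow_pos_of_pos (zero_lt_one.trans hq1) α
  set d := ⌊(q : ℝ) ^ α⌋₊
  have hdq : d < q := (Nat.floor_lt hqα.le).2
    ((Real.rpow_lt_rpow_of_exponent_lt hq1 hα1).trans_eq (Real.rpow_one _))
  have hclosure : (⋃ i, L i) ⊆ clDeg d (⋃ i, γ i) := Set.iUnion_subset fun i =>
    ((hL i).subset_clDeg (hγL i) ((Nat.floor_lt hqα.le).2 (hsize i))).trans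
      (clDeg_mono (Set.subset_iUnion γ i))
  have hcount : ((⋃ i, L i).ncard : ℝ) * (d + 1) ^ n ≤ n ! * q ^ n * (⋃ i, γ i).ncard := by
    exact_mod_cast hq ▸ ncard_mul_pow_le_of_subset_clDeg (hq ▸ hdq) (Set.iUnion_mono hγL) hclosure
  have hsplit : (q : ℝ) ^ n = q ^ ((n : ℝ) * (1 - α)) * ((q : ℝ) ^ α) ^ n := by
    rw [← Real.rpow_natCast, ← Real.rpow_natCast, ← Real.rpow_mul (by positivity),
      ← Real.rpow_add (by positivity)]
    ring_nf
  refine le_of_mul_le_mul_right ?_ (pow_pos hqα n)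
  calc _ ≤ ((⋃ i, L i).ncard : ℝ) * (d + 1) ^ n := by
        gcongr
        exact (Nat.lt_floor_add_one _).le
    _ ≤ _ := hcount
    _ = _ := by rw [hsplit]; ring

/-- union of lines, `|γ_i| > q^α` implies `|X| ≤ n! · q^{n(1-α)} · |Y|`. -/
theorem statement4 (K : Type*) [Field K] [Fintype K] (q n c : ℕ) (hq : Fintype.card K = q)
    (hn : 1 ≤ n) (α : ℝ) (hα0 : 0 < α) (hα1 : α < 1)
    (L γ : Fin c → Set (Fin n → K))
    (hL : ∀ i, IsAffineLine (L i)) (hγL : ∀ i, γ i ⊆ L i)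
    (hsize : ∀ i, (q : ℝ) ^ α < ((γ i).ncard : ℝ)) :
    (((⋃ i, L i).ncard : ℝ)) ≤
      (Nat.factorial n : ℝ) * (q : ℝ) ^ ((n : ℝ) * (1 - α)) * ((⋃ i, γ i).ncard : ℝ) :=
  statement4_general K q n c hq α hα1 L γ hL hγL hsize

end
end

section
/- For every n ≥ 1 and every integer Λ ≥ 1 there is a constant C (depending only on n and Λ, not on q) with the following property: for every prime power q, every finite collection Γ_1, …, Γ_c of curves of degree at most Λ in F_q^n, and every choice of subsets γ_i ⊆ Γ_i with |γ_i| ≥ q/2 for each i, one has |⋃_i Γ_i| ≤ C · |⋃_i γ_i|. -/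
open MvPolynomial

noncomputable section

/-!
Write `X = ⋃ Γᵢ`, `E = ⋃ γᵢ`, `q = |K|`, and let `h_X(d)` be the dimension of the space of
functions on `X` induced by polynomials of degree `≤ d`; it is the number of standard monomials of
degree `≤ d` of the vanishing ideal of `X`.
* `h_X(n(q-1)) ≥ |X|`, since every function on `Kⁿ` is a polynomial of degree `≤ q - 1` in each
  variable.
* The standard monomials form a down-closed set of exponents, so writing each exponent as
  `k • quotient + remainder` gives `h_X(k d) ≤ kⁿ h_X(d)`.
* If `2Λd < q`, a polynomial of degree `≤ d` vanishing on `E` vanishes on `X`: on the curve `Γᵢ`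
  it becomes a univariate polynomial of degree `≤ Λd` with more than `Λd` roots, one for each
  point of `γᵢ`. Hence `h_X(d) ≤ h_E(d) ≤ |E|`.
With `d = ⌊(q-1)/2Λ⌋` and `k = 4nΛ` this gives `|X| ≤ (4nΛ)ⁿ |E|`.
-/

open Set Submodule Finsupp

section Pivots

variable (K : Type*) {V ι : Type*} [Semiring K] [AddCommMonoid V] [Module K V] [LinearOrder ι]

def pivots (v : ι → V) : Set ι := {i | v i ∉ span K (v '' Iio i)}

variable {K} (v : ι → V)

theorem mem_span_image_pivots_inter_Iic [WellFoundedLT ι] (i : ι) :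
    v i ∈ span K (v '' (pivots K v ∩ Iic i)) := by
  induction i using WellFoundedLT.induction with
  | _ i ih =>
  by_cases hi : i ∈ pivots K v
  · exact subset_span ⟨i, ⟨hi, le_rfl⟩, rfl⟩
  · refine span_le.2 ?_ (not_not.1 hi)
    rintro _ ⟨j, hj, rfl⟩
    exact span_mono (image_mono (inter_subset_inter_right _ (Iic_subset_Iic.2 hj.le))) (ih j hj)

theorem span_image_pivots_inter [WellFoundedLT ι] {s : Set ι} (hs : IsLowerSet s) :
    span K (v '' (pivots K v ∩ s)) = span K (v '' s) := by
  refine le_antisymm (span_mono (image_mono inter_subset_right)) (span_le.2 ?_)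
  rintro _ ⟨i, hi, rfl⟩
  exact span_mono (image_mono (inter_subset_inter_right _ (hs.Iic_subset hi)))
    (mem_span_image_pivots_inter_Iic v i)

end Pivots

theorem linearIndepOn_pivots {K V ι : Type*} [DivisionRing K] [AddCommGroup V] [Module K V]
    [LinearOrder ι] (v : ι → V) : LinearIndepOn K v (pivots K v) := by
  classical
  refine linearIndepOn_of_finite _ fun t ht htfin => ?_
  lift t to Finset ι using htfin
  induction t using Finset.induction_on_max with
  | empty => simp
  | insert i t hlt ih =>
    have hi : i ∈ pivots K v := ht (by simp)
    rw [Finset.coe_insert, linearIndepOn_insert (fun h => (hlt i h).false)]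
    refine ⟨ih ((Finset.coe_subset.2 (Finset.subset_insert i t)).trans ht), fun hmem => hi ?_⟩
    exact span_mono (image_mono fun j hj => hlt j hj) hmem

theorem mem_pivots_of_add_mem {K A ι : Type*} [CommSemiring K] [Semiring A] [Algebra K A]
    [AddCommMonoid ι] [LinearOrder ι] [IsOrderedCancelAddMonoid ι] {v : ι → A}
    (hv : ∀ a b, v (a + b) = v a * v b) {a b : ι} (h : a + b ∈ pivots K v) :
    b ∈ pivots K v := by
  refine fun hb => h ?_
  have hmul : span K (v '' Iio b) ≤
      (span K (v '' Iio (a + b))).comap (LinearMap.mulLeft K (v a)) := by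
    rw [span_le]
    rintro _ ⟨c, hc, rfl⟩
    simp only [SetLike.mem_coe, mem_comap, LinearMap.mulLeft_apply, ← hv]
    exact subset_span ⟨a + c, (add_lt_add_iff_left a).2 hc, rfl⟩
  simpa [hv] using hmul hb

theorem LinearIndepOn.ncard_le_finrank {K V ι : Type*} [Ring K] [StrongRankCondition K]
    [AddCommGroup V] [Module K V] [Module.Finite K V] {v : ι → V} {s : Set ι}
    (hs : LinearIndepOn K v s) : s.ncard ≤ Module.finrank K V := by
  have := hs.linearIndependent.finite
  have := Fintype.ofFinite s
  rw [← Nat.card_coe_set_eq, Nat.card_eq_fintype_card]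
  exact hs.linearIndependent.fintype_card_le_finrank

theorem finrank_span_le_ncard {K V : Type*} [Ring K] [StrongRankCondition K] [AddCommGroup V]
    [Module K V] {s : Set V} (hs : s.Finite) : Module.finrank K (span K s) ≤ s.ncard := by
  have := hs.fintype
  rw [ncard_eq_toFinset_card']
  exact finrank_span_le_card s

theorem IsLowerSet.ncard_inter_degree_le_mul {σ : Type*} [Fintype σ] {S : Set (σ →₀ ℕ)}
    (hS : IsLowerSet S) {k : ℕ} (hk : 0 < k) (t : ℕ) :
    (S ∩ {μ | μ.degree ≤ k * t}).ncard ≤ k ^ Fintype.card σ * (S ∩ {μ | μ.degree ≤ t}).ncard := by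
  let f : (σ →₀ ℕ) → (σ →₀ ℕ) × (σ → Fin k) :=
    fun μ => (μ.mapRange (· / k) (Nat.zero_div k), fun i => ⟨μ i % k, Nat.mod_lt _ hk⟩)
  have hmaps : ∀ μ ∈ S ∩ {μ | μ.degree ≤ k * t}, f μ ∈ (S ∩ {μ | μ.degree ≤ t}) ×ˢ univ := by
    rintro μ ⟨hμS, hμ⟩
    refine ⟨⟨hS (fun i => Nat.div_le_self _ _) hμS, ?_⟩, trivial⟩
    refine Nat.le_of_mul_le_mul_left ?_ hk
    calc k * (μ.mapRange (· / k) (Nat.zero_div k)).degree = ∑ i, k * (μ i / k) := by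
          simp [degree_eq_sum, Finset.mul_sum]
      _ ≤ μ.degree := by rw [degree_eq_sum]; exact Finset.sum_le_sum fun i _ => Nat.mul_div_le _ _
      _ ≤ k * t := hμ
  have hinj : InjOn f (S ∩ {μ | μ.degree ≤ k * t}) := by
    intro μ _ ν _ h
    ext i
    have hdiv := congrFun (congrArg DFunLike.coe (congrArg Prod.fst h)) i
    have hmod := congrArg Fin.val (congrFun (congrArg Prod.snd h) i)
    simp only [f, mapRange_apply] at hdiv hmod
    rw [← Nat.div_add_mod (μ i) k, ← Nat.div_add_mod (ν i) k, hdiv, hmod]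
  have hfin : ((S ∩ {μ | μ.degree ≤ t}) ×ˢ (univ : Set (σ → Fin k))).Finite :=
    ((finite_of_degree_le t).subset inter_subset_right).prod finite_univ
  calc _ ≤ ((S ∩ {μ | μ.degree ≤ t}) ×ˢ (univ : Set (σ → Fin k))).ncard :=
        ncard_le_ncard_of_injOn f hmaps hinj hfin
    _ = _ := by
      rw [ncard_prod, ncard_univ, Nat.card_fun, Nat.card_fin, Nat.card_eq_fintype_card, mul_comm]

theorem isLowerSet_degree_le {σ : Type*} [LinearOrder σ] (d : ℕ) :
    IsLowerSet (ofDegLex ⁻¹' {μ : σ →₀ ℕ | μ.degree ≤ d}) :=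
  fun _ _ hνμ hμ => (DegLex.monotone_degree hνμ).trans hμ

section RestrictEval

variable {K σ : Type*} [Field K]

def restrictEval (X : Set (σ → K)) : MvPolynomial σ K →ₐ[K] (X → K) :=
  AlgHom.pi fun x => aeval (x : σ → K)

@[simp]
theorem restrictEval_apply (X : Set (σ → K)) (P : MvPolynomial σ K) (x : X) :
    restrictEval X P x = eval (x : σ → K) P :=
  rfl

theorem restrictDegree_le_restrictTotalDegree [Fintype σ] (m : ℕ) :
    restrictDegree σ K m ≤ restrictTotalDegree σ K (Fintype.card σ * m) := by
  refine restrictSupport_mono _ fun μ hμ => ?_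
  change μ.degree ≤ _
  rw [degree_eq_sum]
  exact (Finset.sum_le_card_nsmul _ _ _ fun i _ => hμ i).trans_eq (by simp)

theorem map_restrictTotalDegree_restrictEval [Fintype σ] [Fintype K] (X : Set (σ → K)) :
    (restrictTotalDegree σ K (Fintype.card σ * (Fintype.card K - 1))).map
      (restrictEval X).toLinearMap = ⊤ := by
  classical
  refine eq_top_iff.2 fun g _ => ?_
  obtain ⟨P, hP, hPg⟩ : (fun y => if h : y ∈ X then g ⟨y, h⟩ else 0) ∈
      (restrictDegree σ K (Fintype.card K - 1)).map (evalₗ K σ) := by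
    rw [map_restrict_dom_evalₗ]; trivial
  refine ⟨P, restrictDegree_le_restrictTotalDegree _ hP, funext fun x => ?_⟩
  simpa using congrFun hPg x

def monomialFn (X : Set (σ → K)) (μ : DegLex (σ →₀ ℕ)) : X → K :=
  restrictEval X (monomial (ofDegLex μ) 1)

theorem monomialFn_add (X : Set (σ → K)) (μ ν : DegLex (σ →₀ ℕ)) :
    monomialFn X (μ + ν) = monomialFn X μ * monomialFn X ν := by
  simp [monomialFn, ofDegLex_add, ← map_mul, monomial_mul]

theorem span_monomialFn_degree_le (X : Set (σ → K)) (d : ℕ) :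
    span K (monomialFn X '' (ofDegLex ⁻¹' {μ | μ.degree ≤ d})) =
      (restrictTotalDegree σ K d).map (restrictEval X).toLinearMap := by
  have hset : monomialFn X '' (ofDegLex ⁻¹' {μ | μ.degree ≤ d}) =
      (fun μ => restrictEval X (monomial μ 1)) '' {μ | μ.degree ≤ d} :=
    (image_comp (fun μ => restrictEval X (monomial μ 1)) ofDegLex _).trans
      (congrArg _ (ofDegLex.image_preimage _))
  rw [hset, restrictTotalDegree, restrictSupport_eq_span, map_span, ← image_comp]
  rfl

variable [LinearOrder σ]

/-- The exponents of the standard monomials of the vanishing ideal of `X` for the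
degree-lexicographic order. -/
def stdMonomials (X : Set (σ → K)) : Set (σ →₀ ℕ) :=
  toDegLex ⁻¹' pivots K (monomialFn X)

theorem isLowerSet_stdMonomials (X : Set (σ → K)) : IsLowerSet (stdMonomials X) := by
  intro μ ν hνμ hμ
  have hsplit : toDegLex μ = toDegLex (μ - ν) + toDegLex ν := by
    rw [← toDegLex_add, tsub_add_cancel_of_le hνμ]
  rw [stdMonomials, mem_preimage, hsplit] at hμ
  exact mem_pivots_of_add_mem (monomialFn_add X) hμ

theorem ncard_le_ncard_stdMonomials_inter [Fintype σ] [Fintype K] (X : Set (σ → K)) :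
    X.ncard ≤
      (stdMonomials X ∩ {μ | μ.degree ≤ Fintype.card σ * (Fintype.card K - 1)}).ncard := by
  classical
  set D := Fintype.card σ * (Fintype.card K - 1)
  set s := pivots K (monomialFn X) ∩ ofDegLex ⁻¹' {μ | μ.degree ≤ D}
  have hspan : span K (monomialFn X '' s) = ⊤ := by
    rw [span_image_pivots_inter _ (isLowerSet_degree_le D), span_monomialFn_degree_le,
      map_restrictTotalDegree_restrictEval]
  have hfin : s.Finite :=
    ((finite_of_degree_le D).preimage ofDegLex.injective.injOn).subset inter_subset_right
  calc X.ncard = Module.finrank K (X → K) := by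
        rw [Module.finrank_fintype_fun_eq_card, ← Nat.card_eq_fintype_card, Nat.card_coe_set_eq]
    _ = Module.finrank K (span K (monomialFn X '' s)) := by rw [hspan, finrank_top]
    _ ≤ (monomialFn X '' s).ncard := finrank_span_le_ncard (hfin.image _)
    _ ≤ s.ncard := ncard_image_le hfin

theorem ncard_stdMonomials_inter_le_ncard [Fintype σ] [Fintype K] {X E : Set (σ → K)}
    (hEX : E ⊆ X) {d : ℕ} (hvanish : ∀ P : MvPolynomial σ K, P.totalDegree ≤ d →
      (∀ y ∈ E, eval y P = 0) → ∀ x ∈ X, eval x P = 0) :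
    (stdMonomials X ∩ {μ | μ.degree ≤ d}).ncard ≤ E.ncard := by
  classical
  set s := pivots K (monomialFn X) ∩ ofDegLex ⁻¹' {μ | μ.degree ≤ d}
  let restrictToE : (X → K) →ₗ[K] (E → K) := LinearMap.funLeft K K (inclusion hEX)
  have hinj : InjOn restrictToE (span K (monomialFn X '' s)) := by
    refine LinearMap.injOn_of_disjoint_ker (span_mono (image_mono inter_subset_right)) ?_
    rw [span_monomialFn_degree_le, LinearMap.disjoint_ker]
    rintro _ ⟨P, hP, rfl⟩ hPE
    funext x
    exact hvanish P ((mem_restrictTotalDegree _ _ _).1 hP)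
      (fun y hy => congrFun hPE ⟨y, hy⟩) x x.2
  have hli := ((linearIndepOn_pivots (monomialFn X)).mono inter_subset_left).map_injOn _ hinj
  calc _ = s.ncard := rfl
    _ ≤ Module.finrank K (E → K) := hli.ncard_le_finrank
    _ = E.ncard := by
      rw [Module.finrank_fintype_fun_eq_card, ← Nat.card_eq_fintype_card, Nat.card_coe_set_eq]

theorem ncard_le_pow_mul_ncard_of_vanishing [Fintype σ] [Fintype K] {X E : Set (σ → K)}
    (hEX : E ⊆ X) {d k : ℕ} (hk : 0 < k) (hkd : Fintype.card σ * (Fintype.card K - 1) ≤ k * d)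
    (hvanish : ∀ P : MvPolynomial σ K, P.totalDegree ≤ d →
      (∀ y ∈ E, eval y P = 0) → ∀ x ∈ X, eval x P = 0) :
    X.ncard ≤ k ^ Fintype.card σ * E.ncard :=
  calc X.ncard ≤ (stdMonomials X ∩ {μ | μ.degree ≤ k * d}).ncard :=
        (ncard_le_ncard_stdMonomials_inter X).trans <| ncard_le_ncard
          (inter_subset_inter_right _ fun _ hμ => hμ.trans hkd)
          ((finite_of_degree_le _).subset inter_subset_right)
    _ ≤ k ^ Fintype.card σ * (stdMonomials X ∩ {μ | μ.degree ≤ d}).ncard :=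
        (isLowerSet_stdMonomials X).ncard_inter_degree_le_mul hk d
    _ ≤ k ^ Fintype.card σ * E.ncard :=
        Nat.mul_le_mul_left _ (ncard_stdMonomials_inter_le_ncard hEX hvanish)

end RestrictEval

theorem natDegree_aeval_le_mul_totalDegree {σ R : Type*} [CommSemiring R] {f : σ → Polynomial R}
    {Λ : ℕ} (hf : ∀ i, (f i).natDegree ≤ Λ) (P : MvPolynomial σ R) :
    (aeval f P).natDegree ≤ Λ * P.totalDegree := by
  rw [aeval_def, eval₂_eq]
  refine Polynomial.natDegree_sum_le_of_forall_le _ _ fun μ hμ => ?_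
  calc _ ≤ (∏ i ∈ μ.support, f i ^ μ i).natDegree := Polynomial.natDegree_C_mul_le _ _
    _ ≤ ∑ i ∈ μ.support, μ i * Λ :=
        (Polynomial.natDegree_prod_le _ _).trans <| Finset.sum_le_sum fun i _ =>
          Polynomial.natDegree_pow_le.trans (Nat.mul_le_mul_left _ (hf i))
    _ = Λ * μ.degree := by rw [degree_apply, Finset.mul_sum]; simp only [mul_comm]
    _ ≤ Λ * P.totalDegree := Nat.mul_le_mul_left _ (le_totalDegree hμ)

theorem IsCurveOfDegree.eval_eq_zero {K : Type*} [Field K] {n Λ : ℕ} {Γ γ : Set (Fin n → K)}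
    (hΓ : IsCurveOfDegree Λ Γ) (hγΓ : γ ⊆ Γ) {P : MvPolynomial (Fin n) K}
    (hP : Λ * P.totalDegree < γ.ncard) (hPγ : ∀ y ∈ γ, eval y P = 0) {x : Fin n → K}
    (hx : x ∈ Γ) : eval x P = 0 := by
  obtain ⟨f, hf, rfl⟩ := hΓ
  have heval : ∀ t, (aeval f P).eval t = eval (fun i => (f i).eval t) P := fun t => by
    rw [aeval_def, polynomial_eval_eval₂]
    exact congrArg (eval₂ · _ P) (RingHom.ext fun a => by simp)
  suffices hzero : aeval f P = 0 by
    obtain ⟨t, rfl⟩ := hx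
    rw [← heval, hzero, Polynomial.eval_zero]
  by_contra hne
  have hsub : γ ⊆ (fun t i => (f i).eval t) '' (aeval f P).rootSet K := by
    intro y hy
    obtain ⟨t, rfl⟩ := hγΓ hy
    exact ⟨t, Polynomial.mem_rootSet.2 ⟨hne, by simpa [heval] using hPγ _ hy⟩, rfl⟩
  have hroots := Polynomial.ncard_rootSet_le (aeval f P) K
  have hγroots := (ncard_le_ncard hsub ((Finset.finite_toSet _).image _)).trans
    (ncard_image_le (Finset.finite_toSet _))
  have hdeg := natDegree_aeval_le_mul_totalDegree hf P
  omega

theorem ncard_iUnion_le_of_isCurveOfDegree {K ι : Type*} [Field K] [Fintype K] {n Λ : ℕ}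
    (hn : 1 ≤ n) (hΛ : 1 ≤ Λ) {Γ γ : ι → Set (Fin n → K)} (hΓ : ∀ i, IsCurveOfDegree Λ (Γ i))
    (hγΓ : ∀ i, γ i ⊆ Γ i) (hγ : ∀ i, Fintype.card K ≤ 2 * (γ i).ncard) :
    (⋃ i, Γ i).ncard ≤ (4 * n * Λ) ^ n * (⋃ i, γ i).ncard := by
  set q := Fintype.card K
  have hq : 2 ≤ q := Fintype.one_lt_card
  rcases lt_or_ge (q - 1) (2 * Λ) with hsmall | hlarge
  · rcases (⋃ i, Γ i).eq_empty_or_nonempty with hX | ⟨x, hx⟩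
    · simp [hX]
    obtain ⟨i, -⟩ := mem_iUnion.1 hx
    have hE : 1 ≤ (⋃ i, γ i).ncard := (show 1 ≤ (γ i).ncard by linarith [hγ i]).trans
      (ncard_le_ncard (subset_iUnion γ i))
    calc (⋃ i, Γ i).ncard ≤ q ^ n := by
          simpa using ncard_le_ncard (subset_univ (⋃ i, Γ i))
      _ ≤ (4 * n * Λ) ^ n := Nat.pow_le_pow_left (by nlinarith [show q ≤ 2 * Λ by omega]) n
      _ ≤ (4 * n * Λ) ^ n * (⋃ i, γ i).ncard := Nat.le_mul_of_pos_right _ hE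
  · set d := (q - 1) / (2 * Λ)
    have hd : 1 ≤ d := (Nat.one_le_div_iff (by omega)).2 hlarge
    have hdq : 2 * Λ * d ≤ q - 1 := Nat.mul_div_le _ _
    have hqd : q - 1 < 2 * Λ * (d + 1) := Nat.lt_mul_div_succ _ (by omega)
    have hq4 : q - 1 ≤ 4 * Λ * d := by nlinarith [Nat.le_mul_of_pos_right Λ hd]
    refine (ncard_le_pow_mul_ncard_of_vanishing (iUnion_mono hγΓ) (k := 4 * n * Λ) (d := d)
      (by positivity) ?_ ?_).trans_eq (by rw [Fintype.card_fin])
    · calc Fintype.card (Fin n) * (q - 1) ≤ n * (4 * Λ * d) := by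
            rw [Fintype.card_fin]; exact Nat.mul_le_mul_left n hq4
        _ = 4 * n * Λ * d := by ring
    · intro P hP hPE x hx
      obtain ⟨i, hxi⟩ := mem_iUnion.1 hx
      refine (hΓ i).eval_eq_zero (hγΓ i) ?_ (fun y hy => hPE y (mem_iUnion_of_mem i hy)) hxi
      calc Λ * P.totalDegree ≤ Λ * d := Nat.mul_le_mul_left Λ hP
        _ < (γ i).ncard := by linarith [hγ i, show q - 1 < q by omega]

/-- a uniform constant `C = C(n, Λ)` for unions of curves over
all finite fields. -/
theorem statement8 (n Λ : ℕ) (hn : 1 ≤ n) (hΛ : 1 ≤ Λ) :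
    ∃ C : ℝ, ∀ (K : Type) (_ : Field K) (_ : Fintype K) (c : ℕ)
      (Γ γ : Fin c → Set (Fin n → K)),
      (∀ i, IsCurveOfDegree Λ (Γ i)) → (∀ i, γ i ⊆ Γ i) →
      (∀ i, (Fintype.card K : ℝ) / 2 ≤ ((γ i).ncard : ℝ)) →
      (((⋃ i, Γ i).ncard : ℝ)) ≤ C * ((⋃ i, γ i).ncard : ℝ) := by
  refine ⟨((4 * n * Λ) ^ n : ℕ), fun K _ _ c Γ γ hΓ hγΓ hγ => ?_⟩
  have hγ' : ∀ i, Fintype.card K ≤ 2 * (γ i).ncard := fun i => by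
    exact_mod_cast (div_le_iff₀' two_pos).1 (hγ i)
  exact_mod_cast ncard_iUnion_le_of_isCurveOfDegree hn hΛ hΓ hγΓ hγ'

end
end

section
/- Let q be a prime power, n ≥ 1, m ≥ 1, and let Y be a subset of F_q^n. Then for every integer d ≥ n(q−1) + (m−1)q, HF^m(Y, d) = C(m+n−1, n) · |Y|, where C(m+n−1, n) is the binomial coefficient. -/
/-
Write `m_p` for the maximal ideal of a point `p`. Reducing modulo `X_i ^ q - X_i`, every polynomial
is a combination of products `∏ (X_i ^ q - X_i) ^ {e_i} * X ^ γ` with all `γ_i < q`. Such a product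
lies in every `m_p ^ |e|`, and has degree at most `n (q - 1) + (m - 1) q` when `|e| < m`; hence
polynomials of degree `≤ d` map onto `A / ⋂_{p ∈ Y} m_p ^ m`, which by the Chinese remainder theorem
is `∏_{p ∈ Y} A / m_p ^ m`. After translating `p` to the origin, the monomials of degree `< m` form a
basis of `A / m_p ^ m`, and there are `C(m + n - 1, n)` of them.
-/

open MvPolynomial

noncomputable section

open Function

theorem Ideal.finrank_quotient_comap_iInf_of_sup_eq_top {K A ι : Type*} [Field K] [CommRing A]
    [Algebra K A] [Fintype ι] {V : Submodule K A} {I : ι → Ideal A}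
    (hI : Pairwise (IsCoprime on I)) (hV : V ⊔ (⨅ i, I i).restrictScalars K = ⊤)
    [∀ i, Module.Finite K (A ⧸ I i)] :
    Module.finrank K (V ⧸ Submodule.comap V.subtype ((⨅ i, I i).restrictScalars K)) =
      ∑ i, Module.finrank K (A ⧸ I i) := by
  let Φ : V →ₗ[K] ((i : ι) → A ⧸ I i) :=
    LinearMap.pi (fun i => (Ideal.Quotient.mkₐ K (I i)).toLinearMap) ∘ₗ V.subtype
  have hker : LinearMap.ker Φ = Submodule.comap V.subtype ((⨅ i, I i).restrictScalars K) := by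
    ext v
    simp [Φ, funext_iff, Ideal.Quotient.eq_zero_iff_mem]
  have hsurj : Surjective Φ := by
    intro f
    obtain ⟨a, ha⟩ := Ideal.pi_quotient_surjective hI f
    obtain ⟨v, hv, w, hw, rfl⟩ := Submodule.mem_sup.mp (hV ▸ Submodule.mem_top (x := a))
    have hw : ∀ i, w ∈ I i := by simpa using hw
    exact ⟨⟨v, hv⟩, funext fun i => by simp [Φ, ← ha i, Ideal.Quotient.eq_zero_iff_mem.mpr (hw i)]⟩
  rw [← hker, (LinearMap.quotKerEquivOfSurjective Φ hsurj).finrank_eq, Module.finrank_pi_fintype]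

theorem Ideal.finsuppProd_pow_mem_pow {A ι : Type*} [CommSemiring A] {I : Ideal A} {f : ι → A}
    (hf : ∀ i, f i ∈ I) (e : ι →₀ ℕ) : e.prod (fun i k => f i ^ k) ∈ I ^ e.degree := by
  rw [Finsupp.prod, Finsupp.degree_apply, ← Finset.prod_pow_eq_pow_sum]
  exact Ideal.prod_mem_prod fun i _ => Ideal.pow_mem_pow (hf i) _

theorem Finsupp.natCard_degree_lt_succ {σ : Type*} [Fintype σ] (m : ℕ) :
    Nat.card {α : σ →₀ ℕ | α.degree < m + 1} = (m + Fintype.card σ).choose (Fintype.card σ) := by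
  classical
  have hset : {α : σ →₀ ℕ | α.degree < m + 1} =
      ↑((Finset.range (m + 1)).biUnion fun j => (Finset.univ : Finset σ).finsuppAntidiag j) := by
    ext α
    simp [Finset.mem_finsuppAntidiag, Finsupp.degree_eq_sum]
  rw [hset, Nat.card_coe_set_eq, Set.ncard_coe_finset, Finset.card_biUnion]
  · simp only [Finset.card_finsuppAntidiag_nat_eq_multichoose, Finset.card_univ]
    exact Nat.sum_range_multichoose m _
  · intro i _ j _ hij
    exact Finset.disjoint_left.mpr fun α hi hj =>
      hij ((Finset.mem_finsuppAntidiag.mp hi).1.symm.trans (Finset.mem_finsuppAntidiag.mp hj).1)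

namespace MvPolynomial

variable {σ : Type*}

section QuotientAtPoint

variable (R : Type*) [CommRing R]

theorem isCompl_restrictSupport_compl (s : Set (σ →₀ ℕ)) :
    IsCompl (restrictSupport R s) (restrictSupport R sᶜ) := by
  constructor
  · rw [Submodule.disjoint_def]
    intro P hs hsc
    rw [mem_restrictSupport_iff] at hs hsc
    rw [← support_eq_empty, ← Finset.coe_eq_empty, ← Set.subset_empty_iff,
      ← Set.inter_compl_self s]
    exact Set.subset_inter hs hsc
  · rw [codisjoint_iff, restrictSupport_eq_span, restrictSupport_eq_span, ← Submodule.span_union,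
      ← Set.image_union, Set.union_compl_self, ← restrictSupport_eq_span, restrictSupport_univ]

theorem restrictScalars_pow_idealOfVars (m : ℕ) :
    (idealOfVars σ R ^ m).restrictScalars R = restrictSupport R {α | m ≤ α.degree} := by
  rw [pow_idealOfVars, restrictScalars_restrictSupportIdeal]
  rfl

def quotientPowIdealOfVarsEquiv (m : ℕ) :
    (MvPolynomial σ R ⧸ idealOfVars σ R ^ m) ≃ₗ[R]
      restrictSupport R {α : σ →₀ ℕ | α.degree < m} :=
  (Submodule.Quotient.restrictScalarsEquiv R _).symm ≪≫ₗ
    Submodule.quotEquivOfEq _ _ (restrictScalars_pow_idealOfVars R m) ≪≫ₗ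
    Submodule.quotientEquivOfIsCompl _ _ (isCompl_restrictSupport_compl R _) ≪≫ₗ
    LinearEquiv.ofEq _ _ (by congr 1; ext; simp)

variable {R}

def translate (p : σ → R) : MvPolynomial σ R ≃ₐ[R] MvPolynomial σ R :=
  AlgEquiv.ofAlgHom (aeval fun i => X i + C (p i)) (aeval fun i => X i - C (p i))
    (by ext i : 1; simp) (by ext i : 1; simp)

theorem aeval_zero_translate (p : σ → R) (P : MvPolynomial σ R) :
    aeval 0 (translate p P) = aeval p P := by
  change ((aeval 0).comp (aeval fun i => X i + C (p i))) P = _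
  congr 1
  ext i : 1
  simp

variable {K : Type*} [Field K]

theorem idealOfVars_eq_vanishingIdeal_zero :
    idealOfVars σ K = vanishingIdeal K {(0 : σ → K)} := by
  ext P
  rw [← pow_one (idealOfVars σ K), mem_pow_idealOfVars_iff', mem_vanishingIdeal_singleton_iff,
    aeval_zero]
  simp [Finsupp.degree_eq_zero_iff, constantCoeff_eq]

theorem map_translate_vanishingIdeal_singleton (p : σ → K) :
    (vanishingIdeal K {p}).map (translate p : MvPolynomial σ K →+* MvPolynomial σ K) =
      idealOfVars σ K := by
  ext P
  change P ∈ Ideal.map ((translate p).toRingEquiv : MvPolynomial σ K →+* MvPolynomial σ K) _ ↔ _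
  rw [Ideal.map_comap_of_equiv, Ideal.mem_comap, idealOfVars_eq_vanishingIdeal_zero,
    mem_vanishingIdeal_singleton_iff, mem_vanishingIdeal_singleton_iff, ← aeval_zero_translate]
  simp

def quotientPowVanishingIdealSingletonEquiv (p : σ → K) (m : ℕ) :
    (MvPolynomial σ K ⧸ vanishingIdeal K {p} ^ m) ≃ₗ[K]
      restrictSupport K {α : σ →₀ ℕ | α.degree < m} :=
  (Ideal.quotientEquivAlg _ _ (translate p)
      (by rw [Ideal.map_pow, map_translate_vanishingIdeal_singleton])).toLinearEquiv ≪≫ₗ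
    quotientPowIdealOfVarsEquiv K m

instance [Finite σ] (p : σ → K) (m : ℕ) :
    Module.Finite K (MvPolynomial σ K ⧸ vanishingIdeal K {p} ^ m) :=
  have := (Finsupp.finite_of_degree_lt (σ := σ) m).to_subtype
  have := Module.Finite.of_basis (basisRestrictSupport K {α : σ →₀ ℕ | α.degree < m})
  .equiv (quotientPowVanishingIdealSingletonEquiv p m).symm

theorem finrank_quotient_pow_vanishingIdeal_singleton [Fintype σ] (p : σ → K) {m : ℕ}
    (hm : 1 ≤ m) :
    Module.finrank K (MvPolynomial σ K ⧸ vanishingIdeal K {p} ^ m) =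
      (m + Fintype.card σ - 1).choose (Fintype.card σ) := by
  obtain ⟨m, rfl⟩ := Nat.exists_eq_add_of_le' hm
  rw [(quotientPowVanishingIdealSingletonEquiv p _).finrank_eq,
    Module.finrank_eq_nat_card_basis (basisRestrictSupport K _), Finsupp.natCard_degree_lt_succ,
    Nat.add_right_comm, Nat.add_sub_cancel]

theorem isCoprime_pow_vanishingIdeal_singleton {p p' : σ → K} (h : p ≠ p') (m : ℕ) :
    IsCoprime (vanishingIdeal K {p} ^ m) (vanishingIdeal K {p'} ^ m) := by
  refine IsCoprime.pow (Ideal.isCoprime_iff_sup_eq.mpr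
    (Ideal.IsMaximal.coprime_of_ne inferInstance inferInstance fun hpp' => h ?_))
  funext i
  have hi : X i - C (p i) ∈ vanishingIdeal K {p} := by simp
  rw [hpp', mem_vanishingIdeal_singleton_iff] at hi
  simpa [sub_eq_zero, eq_comm] using hi

end QuotientAtPoint

section Reduction

variable {R : Type*} [CommRing R]

variable (σ R) in
def gridMonomials (q : ℕ) : Set (MvPolynomial σ R) :=
  {P | ∃ e γ : σ →₀ ℕ, (∀ i, γ i < q) ∧
    P = e.prod (fun i k => (X i ^ q - X i) ^ k) * monomial γ 1}

theorem X_mul_mem_span_gridMonomials {q : ℕ} (hq : 2 ≤ q) (i : σ) {P : MvPolynomial σ R}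
    (hP : P ∈ Submodule.span R (gridMonomials σ R q)) :
    X i * P ∈ Submodule.span R (gridMonomials σ R q) := by
  classical
  induction hP using Submodule.span_induction with
  | mem P hP =>
    obtain ⟨e, γ, hγ, rfl⟩ := hP
    set G : (σ →₀ ℕ) → MvPolynomial σ R := fun e => e.prod (fun i k => (X i ^ q - X i) ^ k)
    rcases Nat.lt_or_ge (γ i + 1) q with hi | hi
    · refine Submodule.subset_span ⟨e, γ + Finsupp.single i 1, fun j => ?_, ?_⟩
      · rcases eq_or_ne j i with rfl | hj
        · simpa using hi
        · simpa [Finsupp.single_eq_of_ne hj] using hγ j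
      · rw [monomial_add_single]; ring
    · -- `X i ^ q = (X i ^ q - X i) + X i` lowers the exponent of `X i` from `q` to `0` and `1`
      obtain ⟨k, rfl⟩ : ∃ k, q = k + 1 := ⟨q - 1, by omega⟩
      have hγi : γ i = k := by have := hγ i; omega
      have hG : G (e + Finsupp.single i 1) = G e * (X i ^ (k + 1) - X i) := by
        simp only [G]
        rw [Finsupp.prod_add_index' (by simp) (fun _ _ _ => pow_add _ _ _),
          Finsupp.prod_single_index (by simp), pow_one]
      have key : X i * (G e * monomial γ 1) = G (e + Finsupp.single i 1) * monomial (γ.erase i) 1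
          + G e * monomial (γ.erase i + Finsupp.single i 1) 1 := by
        conv_lhs => rw [← Finsupp.erase_add_single i γ, hγi, monomial_add_single]
        rw [hG, monomial_add_single]
        ring
      have hlt : ∀ j, (γ.erase i) j < k + 1 := fun j => by
        rcases eq_or_ne j i with rfl | hj
        · simp
        · simpa [Finsupp.erase_ne hj] using hγ j
      rw [key]
      refine Submodule.add_mem _ (Submodule.subset_span ⟨_, _, hlt, rfl⟩)
        (Submodule.subset_span ⟨_, _, fun j => ?_, rfl⟩)
      rcases eq_or_ne j i with rfl | hj
      · simp; omega
      · simpa [Finsupp.single_eq_of_ne hj] using hlt j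
  | zero => simp
  | add x y _ _ hx hy => rw [mul_add]; exact Submodule.add_mem _ hx hy
  | smul c x _ hx => rw [mul_smul_comm]; exact Submodule.smul_mem _ c hx

theorem span_gridMonomials {q : ℕ} (hq : 2 ≤ q) :
    Submodule.span R (gridMonomials σ R q) = ⊤ := by
  refine Submodule.eq_top_iff'.mpr fun P => ?_
  induction P using MvPolynomial.induction_on with
  | C a =>
    rw [← mul_one (C a), ← smul_eq_C_mul]
    exact Submodule.smul_mem _ a (Submodule.subset_span
      ⟨0, 0, fun _ => by rw [Finsupp.coe_zero, Pi.zero_apply]; omega, by simp⟩)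
  | add P Q hP hQ => exact Submodule.add_mem _ hP hQ
  | mul_X P i hP => rw [mul_comm]; exact X_mul_mem_span_gridMonomials hq i hP

theorem totalDegree_finsuppProd_X_pow_sub_X_le [Nontrivial R] {q : ℕ} (hq : 1 ≤ q)
    (e : σ →₀ ℕ) :
    (e.prod fun i k => (X i ^ q - X i : MvPolynomial σ R) ^ k).totalDegree ≤ q * e.degree := by
  refine (totalDegree_finsetProd _ _).trans ?_
  rw [Finsupp.degree_apply, Finset.mul_sum]
  refine Finset.sum_le_sum fun i _ => (totalDegree_pow _ _).trans ?_
  rw [mul_comm]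
  refine Nat.mul_le_mul_right _ ((totalDegree_sub _ _).trans ?_)
  rw [totalDegree_X_pow, totalDegree_X]
  exact max_le le_rfl hq

theorem totalDegree_monomial_le_of_lt [Fintype σ] {q : ℕ} {γ : σ →₀ ℕ} (hγ : ∀ i, γ i < q)
    (c : R) : (monomial γ c).totalDegree ≤ Fintype.card σ * (q - 1) := by
  refine (totalDegree_monomial_le _ _).trans ?_
  change γ.degree ≤ _
  rw [Finsupp.degree_eq_sum, ← smul_eq_mul, ← Finset.card_univ, ← Finset.sum_const]
  exact Finset.sum_le_sum fun i _ => Nat.le_sub_one_of_lt (hγ i)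

variable {K : Type*} [Field K] [Fintype K]

theorem X_pow_card_sub_X_mem_vanishingIdeal_singleton (i : σ) (p : σ → K) :
    X i ^ Fintype.card K - X i ∈ vanishingIdeal K {p} := by
  rw [mem_vanishingIdeal_singleton_iff]
  simp [FiniteField.pow_card]

theorem restrictTotalDegree_sup_iInf_pow_vanishingIdeal [Fintype σ] {m d : ℕ}
    (hd : Fintype.card σ * (Fintype.card K - 1) + (m - 1) * Fintype.card K ≤ d) :
    restrictTotalDegree σ K d ⊔ (⨅ p : σ → K, vanishingIdeal K {p} ^ m).restrictScalars K = ⊤ := by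
  rw [eq_top_iff, ← span_gridMonomials (Fintype.one_lt_card (α := K)), Submodule.span_le]
  rintro _ ⟨e, γ, hγ, rfl⟩
  rcases le_or_gt m e.degree with hme | hme
  · refine Submodule.mem_sup_right ((Submodule.restrictScalars_mem _ _ _).mpr ?_)
    refine (Submodule.mem_iInf _).mpr fun p => Ideal.mul_mem_right _ _ ?_
    exact Ideal.pow_le_pow_right hme (Ideal.finsuppProd_pow_mem_pow
      (fun i => X_pow_card_sub_X_mem_vanishingIdeal_singleton i p) e)
  · refine Submodule.mem_sup_left ((mem_restrictTotalDegree _ _ _).mpr ?_)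
    refine (totalDegree_mul _ _).trans ?_
    have := totalDegree_finsuppProd_X_pow_sub_X_le (R := K) (Fintype.card_pos (α := K)) e
    have := totalDegree_monomial_le_of_lt hγ (1 : K)
    have : Fintype.card K * e.degree ≤ (m - 1) * Fintype.card K := by
      rw [mul_comm]; exact Nat.mul_le_mul_right _ (by omega)
    omega

end Reduction

end MvPolynomial

theorem statement15_general (K : Type*) [Field K] [Fintype K] (q n m : ℕ)
    (hq : Fintype.card K = q) (hm : 1 ≤ m)
    (Y : Set (Fin n → K)) (d : ℕ) (hd : n * (q - 1) + (m - 1) * q ≤ d) :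
    HFm m Y d = (m + n - 1).choose n * Y.ncard := by
  subst hq
  have hsplit : restrictTotalDegree (Fin n) K d ⊔
      (⨅ p : Y, vanishingIdeal K {(p : Fin n → K)} ^ m).restrictScalars K = ⊤ :=
    top_unique <| (restrictTotalDegree_sup_iInf_pow_vanishingIdeal (by simpa using hd)).ge.trans <|
      sup_le_sup_left (Submodule.restrictScalars_mono K (le_iInf fun p => iInf_le _ _)) _
  have hcoprime : Pairwise (IsCoprime on fun p : Y => vanishingIdeal K {(p : Fin n → K)} ^ m) :=
    fun p p' h => isCoprime_pow_vanishingIdeal_singleton (Subtype.coe_injective.ne h) m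
  have : Fintype Y := Fintype.ofFinite Y
  rw [HFm, affineHF, orderIdeal, iInf_subtype', Ideal.finrank_quotient_comap_iInf_of_sup_eq_top
    hcoprime hsplit]
  simp_rw [finrank_quotient_pow_vanishingIdeal_singleton _ hm, Fintype.card_fin]
  rw [Finset.sum_const, Finset.card_univ, smul_eq_mul, ← Nat.card_eq_fintype_card,
    Nat.card_coe_set_eq, mul_comm]

/-- over `F_q`, for `d ≥ n(q-1) + (m-1)q`,
`HF^m(Y, d) = C(m+n-1, n) · |Y|`. -/
theorem statement15 (K : Type*) [Field K] [Fintype K] (q n m : ℕ)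
    (hq : Fintype.card K = q) (hn : 1 ≤ n) (hm : 1 ≤ m)
    (Y : Set (Fin n → K)) (d : ℕ) (hd : n * (q - 1) + (m - 1) * q ≤ d) :
    HFm m Y d = (m + n - 1).choose n * Y.ncard :=
  statement15_general K q n m hq hm Y d hd
end
end
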